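/- Let Σ_k and Σ_m be real n×n positive semidefinite matrices with range(Σ_k) = range(Σ_m), and let Φ be a real ℓ×n matrix such that rank(Σ_m^{1/2}·Φᵀ·Φ·Σ_m^{1/2}) = rank(Σ_m). Then lim_{σ²→0⁺} tr(Σ_k·Φᵀ·(σ²·I_ℓ + Φ·Σ_m·Φᵀ)⁻¹·Φ·Σ_m) = tr(Σ_k). -/

import Mathlib

/-! Put `S = Σ_m^{1/2}`, `B = Φ S`, `M = Bᵀ B` and `R = (σ + M)⁻¹`. The range hypothesis gives
`Σ_k = Gᵀ S`, and the push-through identity `(σ + B Bᵀ)⁻¹ B = B R` turns the trace into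
`tr (Gᵀ M R S)`. As `M R = 1 - σ R`, it differs from `tr Σ_k` by `σ tr (Gᵀ R S)`, and `R` is unbounded
as `σ → 0` only on `ker M`. The rank hypothesis says `range M = range S`, so `S = M C` and
`R S = (R M) C`, where `0 ≤ R M ≤ 1` has entries bounded by `1`: the defect is `O(σ)`. -/

open Matrix Filter Topology

section
open scoped ComplexOrder
/-- The positive semidefinite square root, as `Matrix.PosSemidef.sqrt` was defined in Mathlib
(Dec 2024); it has since been removed from Mathlib. -/
noncomputable def Matrix.PosSemidef.sqrt {n : Type*} [Fintype n] [DecidableEq n] {𝕜 : Type*}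
    [RCLike 𝕜] {A : Matrix n n 𝕜} (hA : A.PosSemidef) : Matrix n n 𝕜 :=
  (hA.1.eigenvectorUnitary : Matrix n n 𝕜) *
    diagonal ((RCLike.ofReal : ℝ → 𝕜) ∘ (√·) ∘ hA.1.eigenvalues) *
    (star hA.1.eigenvectorUnitary : Matrix n n 𝕜)
end

open scoped MatrixOrder

namespace Matrix

variable {l m n p : Type*}

theorem PosSemidef.sqrt_eq_cfcSqrt [Fintype n] [DecidableEq n] {A : Matrix n n ℝ}
    (hA : A.PosSemidef) : hA.sqrt = CFC.sqrt A := by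
  rw [CFC.sqrt_eq_real_sqrt A hA.nonneg, cfcₙ_eq_cfc, hA.1.cfc_eq]
  rfl

theorem exists_eq_mul_of_range_mulVecLin_le {R : Type*} [CommSemiring R] [Fintype n] [Fintype p]
    [DecidableEq p] {A : Matrix m p R} {B : Matrix m n R}
    (h : LinearMap.range A.mulVecLin ≤ LinearMap.range B.mulVecLin) :
    ∃ C : Matrix n p R, A = B * C := by
  choose c hc using fun j : p => h ⟨Pi.single j 1, rfl⟩
  refine ⟨(of c)ᵀ, ext_of_mulVec_single fun j => ?_⟩
  rw [← mulVec_mulVec, mulVec_single_one (of c)ᵀ]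
  exact (hc j).symm

theorem exists_eq_transpose_mul_of_range_mulVecLin_le {R : Type*} [CommSemiring R] [Fintype n]
    [DecidableEq n] {A S : Matrix n n R} (hA : Aᵀ = A) (hS : Sᵀ = S)
    (h : LinearMap.range A.mulVecLin ≤ LinearMap.range S.mulVecLin) :
    ∃ G : Matrix n n R, A = Gᵀ * S := by
  obtain ⟨G, hG⟩ := exists_eq_mul_of_range_mulVecLin_le h
  exact ⟨G, by rw [← hA, hG, transpose_mul, hS]⟩

theorem range_mulVecLin_mul_eq_of_rank_eq {K : Type*} [Field K] [Fintype m] [Fintype n]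
    [Fintype p] {A : Matrix m n K} {B : Matrix n p K} (h : (A * B).rank = A.rank) :
    LinearMap.range (A * B).mulVecLin = LinearMap.range A.mulVecLin := by
  refine Submodule.eq_of_le_of_finrank_le ?_ h.ge
  rw [mulVecLin_mul]
  exact LinearMap.range_comp_le_range _ _

theorem inv_mul_eq_mul_inv_of_mul_eq {R : Type*} [CommRing R] [Fintype m] [Fintype n]
    [DecidableEq m] [DecidableEq n] {P : Matrix m m R} {Q : Matrix n n R} {B : Matrix m n R}
    (hP : IsUnit P) (hQ : IsUnit Q) (h : P * B = B * Q) : P⁻¹ * B = B * Q⁻¹ := by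
  have := hP.invertible
  have := hQ.invertible
  calc P⁻¹ * B = P⁻¹ * (B * Q * Q⁻¹) := by rw [mul_inv_cancel_right_of_invertible]
  _ = B * Q⁻¹ := by rw [← h, Matrix.mul_assoc, inv_mul_cancel_left_of_invertible]

theorem inv_smul_one_add_mul {R : Type*} [CommRing R] [Fintype n] [DecidableEq n]
    {M : Matrix n n R} {σ : R} (h : IsUnit (σ • 1 + M)) :
    (σ • 1 + M)⁻¹ * M = 1 - σ • (σ • 1 + M)⁻¹ := by
  have := h.invertible
  rw [eq_sub_iff_add_eq]
  calc (σ • 1 + M)⁻¹ * M + σ • (σ • 1 + M)⁻¹ = (σ • 1 + M)⁻¹ * (σ • 1 + M) := by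
        rw [Matrix.mul_add, Matrix.mul_smul, Matrix.mul_one, add_comm]
  _ = 1 := inv_mul_of_invertible _

theorem mul_inv_smul_one_add {R : Type*} [CommRing R] [Fintype n] [DecidableEq n]
    {M : Matrix n n R} {σ : R} (h : IsUnit (σ • 1 + M)) :
    M * (σ • 1 + M)⁻¹ = 1 - σ • (σ • 1 + M)⁻¹ := by
  have := h.invertible
  rw [eq_sub_iff_add_eq]
  calc M * (σ • 1 + M)⁻¹ + σ • (σ • 1 + M)⁻¹ = (σ • 1 + M) * (σ • 1 + M)⁻¹ := by
        rw [Matrix.add_mul, Matrix.smul_mul, Matrix.one_mul, add_comm]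
  _ = 1 := mul_inv_of_invertible _

theorem abs_trace_mul_le_sum_abs [Fintype n] (X : Matrix n n ℝ) {L : Matrix n n ℝ}
    (hL : ∀ i j, |L i j| ≤ 1) : |(X * L).trace| ≤ ∑ i, ∑ j, |X i j| := by
  simp only [trace, diag, mul_apply]
  refine (Finset.abs_sum_le_sum_abs _ _).trans (Finset.sum_le_sum fun i _ => ?_)
  refine (Finset.abs_sum_le_sum_abs _ _).trans (Finset.sum_le_sum fun j _ => ?_)
  rw [abs_mul]
  exact mul_le_of_le_one_right (abs_nonneg _) (hL j i)

theorem PosSemidef.two_mul_abs_apply_le [Fintype n] [DecidableEq n] {A : Matrix n n ℝ}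
    (hA : A.PosSemidef) (i j : n) : 2 * |A i j| ≤ A i i + A j j := by
  have hq (x : n → ℝ) : 0 ≤ x ⬝ᵥ A *ᵥ x := by simpa using hA.dotProduct_mulVec_nonneg x
  have hsymm : A j i = A i j := by simpa using hA.1.apply i j
  have hadd := hq (Pi.single i 1 + Pi.single j 1)
  have hsub := hq (Pi.single i 1 - Pi.single j 1)
  simp only [mulVec_add, mulVec_sub, add_dotProduct, sub_dotProduct, dotProduct_add,
    dotProduct_sub, single_dotProduct, mulVec_single_one, col_apply, one_mul, hsymm] at hadd hsub
  rcases abs_cases (A i j) with ⟨h, -⟩ | ⟨h, -⟩ <;> linarith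

theorem PosSemidef.abs_apply_le_one [Fintype n] [DecidableEq n] {N : Matrix n n ℝ}
    (hN : N.PosSemidef) (hN₁ : (1 - N).PosSemidef) (i j : n) : |N i j| ≤ 1 := by
  have hi := hN₁.diag_nonneg (i := i)
  have hj := hN₁.diag_nonneg (i := j)
  simp only [sub_apply, one_apply_eq] at hi hj
  linarith [hN.two_mul_abs_apply_le i j]

theorem PosSemidef.posDef_smul_one_add [DecidableEq n] {M : Matrix n n ℝ} {σ : ℝ}
    (hM : M.PosSemidef) (hσ : 0 < σ) : (σ • 1 + M).PosDef :=
  (PosDef.one.smul hσ).add_posSemidef hM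

theorem posSemidef_inv_smul_one_add_mul [Fintype n] [DecidableEq n] {M : Matrix n n ℝ} {σ : ℝ}
    (hM : M.PosSemidef) (hσ : 0 < σ) : ((σ • 1 + M)⁻¹ * M).PosSemidef := by
  have hR := (hM.posDef_smul_one_add hσ).inv
  have := (hM.posDef_smul_one_add hσ).isUnit.invertible
  have hMQ : σ • M + Mᴴ * M = M * (σ • 1 + M) := by
    rw [hM.1.eq, Matrix.mul_add, Matrix.mul_smul, Matrix.mul_one]
  have hconj : (σ • 1 + M)⁻¹ * (σ • M + Mᴴ * M) * ((σ • 1 + M)⁻¹)ᴴ = (σ • 1 + M)⁻¹ * M := by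
    rw [hR.1.eq, hMQ, Matrix.mul_assoc, Matrix.mul_assoc, mul_inv_of_invertible, Matrix.mul_one]
  rw [← hconj]
  exact ((hM.smul hσ.le).add (posSemidef_conjTranspose_mul_self M)).mul_mul_conjTranspose_same _

theorem abs_inv_smul_one_add_mul_apply_le_one [Fintype n] [DecidableEq n] {M : Matrix n n ℝ}
    {σ : ℝ} (hM : M.PosSemidef) (hσ : 0 < σ) (i j : n) : |((σ • 1 + M)⁻¹ * M) i j| ≤ 1 := by
  refine PosSemidef.abs_apply_le_one (posSemidef_inv_smul_one_add_mul hM hσ) ?_ i j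
  rw [inv_smul_one_add_mul (hM.posDef_smul_one_add hσ).isUnit, sub_sub_cancel]
  exact (hM.posDef_smul_one_add hσ).inv.posSemidef.smul hσ.le

theorem transpose_mul_inv_smul_one_add_mul_transpose_mul [Fintype l] [Fintype n] [DecidableEq l]
    [DecidableEq n] (B : Matrix l n ℝ) {σ : ℝ} (hσ : 0 < σ) :
    Bᵀ * (σ • 1 + B * Bᵀ)⁻¹ * B = 1 - σ • (σ • 1 + Bᵀ * B)⁻¹ := by
  have hBBt : (B * Bᵀ).PosSemidef := by
    simpa using posSemidef_self_mul_conjTranspose B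
  have hBtB : (Bᵀ * B).PosSemidef := by
    simpa using posSemidef_conjTranspose_mul_self B
  have hpush : (σ • 1 + B * Bᵀ) * B = B * (σ • 1 + Bᵀ * B) := by
    simp only [Matrix.add_mul, Matrix.mul_add, Matrix.smul_mul, Matrix.mul_smul, Matrix.one_mul,
      Matrix.mul_one, Matrix.mul_assoc]
  rw [Matrix.mul_assoc, inv_mul_eq_mul_inv_of_mul_eq (hBBt.posDef_smul_one_add hσ).isUnit
    (hBtB.posDef_smul_one_add hσ).isUnit hpush, ← Matrix.mul_assoc,
    mul_inv_smul_one_add (hBtB.posDef_smul_one_add hσ).isUnit]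

theorem trace_regularized_eq [Fintype l] [Fintype n] [DecidableEq l] [DecidableEq n]
    (Φ : Matrix l n ℝ) {S G C : Matrix n n ℝ} (hS : Sᵀ = S)
    (hC : S = (Φ * S)ᵀ * (Φ * S) * C) {σ : ℝ} (hσ : 0 < σ) :
    (Gᵀ * S * Φᵀ * (σ • 1 + Φ * (S * S) * Φᵀ)⁻¹ * Φ * (S * S)).trace =
      (Gᵀ * S).trace -
        σ * (C * Gᵀ * ((σ • 1 + (Φ * S)ᵀ * (Φ * S))⁻¹ * ((Φ * S)ᵀ * (Φ * S)))).trace := by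
  set B := Φ * S
  set L := (σ • 1 + Bᵀ * B)⁻¹ * (Bᵀ * B)
  have hBt : S * Φᵀ = Bᵀ := by rw [transpose_mul, hS]
  have hP : Φ * (S * S) * Φᵀ = B * Bᵀ := by simp only [B, ← hBt, Matrix.mul_assoc]
  have hRS : (σ • 1 + Bᵀ * B)⁻¹ * S = L * C := by
    conv_lhs => rw [hC]
    simp only [L, Matrix.mul_assoc]
  calc _ = (Gᵀ * (Bᵀ * (σ • 1 + B * Bᵀ)⁻¹ * B) * S).trace := by
        rw [hP, ← hBt]; simp only [B, Matrix.mul_assoc]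
  _ = (Gᵀ * S - σ • (Gᵀ * (L * C))).trace := by
        rw [transpose_mul_inv_smul_one_add_mul_transpose_mul B hσ, Matrix.mul_sub, Matrix.sub_mul,
          Matrix.mul_one, Matrix.mul_smul, Matrix.smul_mul, Matrix.mul_assoc, hRS]
  _ = _ := by
        rw [trace_sub, trace_smul, smul_eq_mul, ← Matrix.mul_assoc, trace_mul_cycle Gᵀ L C]

end Matrix

theorem tendsto_sub_mul_nhdsGT_zero {g : ℝ → ℝ} {K : ℝ} (a : ℝ) (hg : ∀ σ > 0, |g σ| ≤ K) :
    Tendsto (fun σ => a - σ * g σ) (𝓝[>] 0) (𝓝 a) := by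
  have hbdd : IsBoundedUnder (· ≤ ·) (𝓝[>] 0) (fun σ => ‖g σ‖) :=
    isBoundedUnder_of_eventually_le (eventually_nhdsWithin_of_forall hg)
  simpa using tendsto_const_nhds.sub
    ((tendsto_nhdsWithin_of_tendsto_nhds tendsto_id).zero_mul_isBoundedUnder_le hbdd)

/-- If range(Σ_k) = range(Σ_m) and rank(Σ_m^{1/2}·Φᵀ·Φ·Σ_m^{1/2}) = rank(Σ_m),
then tr(Σ_k·Φᵀ·(σ²·I + Φ·Σ_m·Φᵀ)⁻¹·Φ·Σ_m) → tr(Σ_k) as σ² → 0⁺. -/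
theorem stmt_14 {n l : ℕ} (Sk Sm : Matrix (Fin n) (Fin n) ℝ)
    (hSk : Sk.PosSemidef) (hSm : Sm.PosSemidef)
    (hrange : LinearMap.range Sk.mulVecLin = LinearMap.range Sm.mulVecLin)
    (Φ : Matrix (Fin l) (Fin n) ℝ)
    (hrank : (hSm.sqrt * Φᵀ * Φ * hSm.sqrt).rank = Sm.rank) :
    Tendsto (fun σ2 : ℝ =>
        (Sk * Φᵀ * (σ2 • (1 : Matrix (Fin l) (Fin l) ℝ) + Φ * Sm * Φᵀ)⁻¹ * Φ * Sm).trace)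
      (nhdsWithin 0 (Set.Ioi 0)) (nhds Sk.trace) := by
  rw [hSm.sqrt_eq_cfcSqrt] at hrank
  set S := CFC.sqrt Sm
  have hS : S.PosSemidef := (CFC.sqrt_nonneg Sm).posSemidef
  have hSS : S * S = Sm := CFC.sqrt_mul_sqrt_self Sm hSm.nonneg
  have hSt : Sᵀ = S := (by simpa using hS.1 : S.IsSymm)
  have hrankS : (S * (Φᵀ * Φ * S)).rank = S.rank := by
    rw [← Matrix.mul_assoc, ← Matrix.mul_assoc, hrank, ← hSS]
    simpa [hSt] using rank_transpose_mul_self S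
  have hM : (Φ * S)ᵀ * (Φ * S) = S * (Φᵀ * Φ * S) := by
    simp only [transpose_mul, hSt, Matrix.mul_assoc]
  have hrangeSm : LinearMap.range Sm.mulVecLin ≤ LinearMap.range S.mulVecLin := by
    rw [← hSS, mulVecLin_mul]
    exact LinearMap.range_comp_le_range _ _
  obtain ⟨G, hG⟩ := exists_eq_transpose_mul_of_range_mulVecLin_le
    (by simpa using hSk.1 : Sk.IsSymm) hSt (hrange.le.trans hrangeSm)
  obtain ⟨C, hC⟩ := exists_eq_mul_of_range_mulVecLin_le (A := S) (B := (Φ * S)ᵀ * (Φ * S))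
    (hM ▸ range_mulVecLin_mul_eq_of_rank_eq hrankS).ge
  rw [hG, ← hSS]
  refine (tendsto_sub_mul_nhdsGT_zero _ fun σ hσ => abs_trace_mul_le_sum_abs (C * Gᵀ)
    (abs_inv_smul_one_add_mul_apply_le_one ((Φ * S).posSemidef_conjTranspose_mul_self) hσ)).congr'
      (eventually_nhdsWithin_of_forall fun σ hσ => (trace_regularized_eq Φ hSt hC hσ).symm)
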